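/- arXiv:1802.03210 — 2 statements merged into one kernel-verified Lean document; each statement's English description precedes it below -/
import Mathlib

section
/- Bounds on the maximal cosystole: Let X be a finite abstract simplicial complex and k ≥ 0 with f_k(X) > 0, and set f_{−1}(X) = 1. Let λ_k(X) = max{‖φ‖_csy : φ a k-cochain of X over Z/2}. Then (1 − 20·√(f_{k−1}(X)/f_k(X))) · f_k(X)/2 ≤ λ_k(X) ≤ f_k(X)/2. -/
open Finset

section Simplicial

variable {V : Type*} [DecidableEq V]

/-- `X` is a finite abstract simplicial complex: a finite family of nonempty finite sets
closed under taking nonempty subsets. -/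
def IsComplex (X : Finset (Finset V)) : Prop :=
  (∀ σ ∈ X, σ.Nonempty) ∧ ∀ σ ∈ X, ∀ τ ⊆ σ, τ.Nonempty → τ ∈ X

/-- The `k`-dimensional faces of `X` (faces of cardinality `k+1`). -/
def faces (X : Finset (Finset V)) (k : ℕ) : Finset (Finset V) :=
  X.filter fun σ => σ.card = k + 1

/-- The support of a `k`-cochain. -/
def csupp (X : Finset (Finset V)) (k : ℕ) (φ : Finset V → ZMod 2) : Finset (Finset V) :=
  (faces X k).filter fun σ => φ σ ≠ 0

/-- The norm of a `k`-cochain. -/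
def cnorm (X : Finset (Finset V)) (k : ℕ) (φ : Finset V → ZMod 2) : ℕ :=
  (csupp X k φ).card

/-- The coboundary of a `k`-cochain, as a `(k+1)`-cochain. -/
def cob (X : Finset (Finset V)) (k : ℕ) (φ : Finset V → ZMod 2) : Finset V → ZMod 2 :=
  fun τ => ∑ σ ∈ (faces X k).filter (fun σ => σ ⊆ τ), φ σ

/-- The cosystolic norm of a `k`-cochain, with the reduced convention at `k = 0`. -/
noncomputable def cosys (X : Finset (Finset V)) (k : ℕ) (φ : Finset V → ZMod 2) : ℕ :=
  if k = 0 then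
    min (cnorm X 0 φ) (cnorm X 0 fun σ => 1 + φ σ)
  else
    sInf {m | ∃ ψ : Finset V → ZMod 2, m = cnorm X k fun τ => φ τ + cob X (k - 1) ψ τ}

/-- The `k`-th (coboundary) Cheeger constant, valued in `ℝ≥0∞` (`⊤` if no cochain has
positive cosystolic norm). -/
noncomputable def cheeger (X : Finset (Finset V)) (k : ℕ) : ENNReal :=
  sInf {r : ENNReal | ∃ φ : Finset V → ZMod 2, 0 < cosys X k φ ∧
    r = (cnorm X (k + 1) (cob X k φ) : ENNReal) / (cosys X k φ : ENNReal)}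

/-- The boundary of a `k`-chain, as a `(k-1)`-chain. -/
def bdry (X : Finset (Finset V)) (k : ℕ) (c : Finset V → ZMod 2) : Finset V → ZMod 2 :=
  fun τ => ∑ σ ∈ (faces X k).filter (fun σ => τ ⊆ σ), c σ

/-- A `k`-cycle, with the reduced convention at `k = 0`. -/
def IsCycle (X : Finset (Finset V)) (k : ℕ) (c : Finset V → ZMod 2) : Prop :=
  if k = 0 then ∑ σ ∈ faces X 0, c σ = 0
  else ∀ τ ∈ faces X (k - 1), bdry X k c τ = 0

/-- Evaluation of a `k`-cochain on a `k`-chain. -/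
def eval (X : Finset (Finset V)) (k : ℕ) (φ c : Finset V → ZMod 2) : ZMod 2 :=
  ∑ σ ∈ faces X k, φ σ * c σ

end Simplicial

/-- `f_{k-1}(X)`, with the convention `f_{-1}(X) = 1`. -/
def fPrev {V : Type*} [DecidableEq V] (X : Finset (Finset V)) (k : ℕ) : ℕ :=
  if k = 0 then 1 else (faces X (k - 1)).card

/-- The maximal norm of a `k`-cosystole of `X`. -/
noncomputable def maxCosys {V : Type*} [DecidableEq V]
    (X : Finset (Finset V)) (k : ℕ) : ℕ :=
  sSup {m | ∃ φ : Finset V → ZMod 2, m = cosys X k φ}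

/-!
For the upper bound, adding the coboundary of a uniformly random `(k-1)`-cochain puts each
`k`-face into the support with probability `1/2`, because toggling one `(k-1)`-face below it
flips its value; so some representative has norm at most `f_k/2`. For `k = 0`, `φ` and `1 + φ`
have complementary supports.

For the lower bound, every `k`-cochain is one of at most `2^{f_{k-1}}` coboundaries plus a
cochain of norm at most `λ_k`, so `2^{f_k} ≤ 2^{f_{k-1}} · #{D ⊆ X(k) : |D| ≤ λ_k}`. If
`λ_k < f_k/2 - s` with `s = 10 √(f_{k-1} f_k)`, Chernoff's bound makes the right-hand side
at most `2^{f_{k-1}} 2^{f_k} e^{-200 f_{k-1}} < 2^{f_k}`.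
-/

open scoped symmDiff

section Cochains

variable {V : Type*} [DecidableEq V] {X : Finset (Finset V)} {j k : ℕ}

def indicatorCochain (S : Finset (Finset V)) : Finset V → ZMod 2 :=
  fun σ => if σ ∈ S then 1 else 0

lemma indicatorCochain_symmDiff (S T : Finset (Finset V)) :
    indicatorCochain (S ∆ T) = indicatorCochain S + indicatorCochain T := by
  ext σ
  by_cases hS : σ ∈ S <;> by_cases hT : σ ∈ T <;>
    simp [indicatorCochain, mem_symmDiff, hS, hT, CharTwo.add_self_eq_zero]

lemma cob_add (φ ψ : Finset V → ZMod 2) : cob X j (φ + ψ) = cob X j φ + cob X j ψ :=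
  funext fun _ => sum_add_distrib

lemma cob_indicatorCochain_singleton {σ τ : Finset V} (hσ : σ ∈ faces X j) (hστ : σ ⊆ τ) :
    cob X j (indicatorCochain {σ}) τ = 1 := by
  simp [cob, indicatorCochain, hσ, hστ]

lemma cob_indicatorCochain_csupp (ψ : Finset V → ZMod 2) :
    cob X j (indicatorCochain (csupp X j ψ)) = cob X j ψ := by
  ext τ
  refine sum_congr rfl fun σ hσ => ?_
  have hψ : ∀ a : ZMod 2, (if a ≠ 0 then 1 else 0) = a := by decide
  simpa [indicatorCochain, csupp, (mem_filter.1 hσ).1] using hψ (ψ σ)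

lemma csupp_add (φ ψ : Finset V → ZMod 2) :
    csupp X k (φ + ψ) = csupp X k φ ∆ csupp X k ψ := by
  have hadd : ∀ a b : ZMod 2, a + b ≠ 0 ↔ (a ≠ 0 ∧ ¬b ≠ 0) ∨ (b ≠ 0 ∧ ¬a ≠ 0) := by
    decide
  ext τ
  simp only [csupp, mem_symmDiff, mem_filter, Pi.add_apply, hadd]
  tauto

lemma csupp_one_add (φ : Finset V → ZMod 2) :
    csupp X k (1 + φ) = faces X k \ csupp X k φ := by
  have hone : ∀ a : ZMod 2, 1 + a ≠ 0 ↔ ¬a ≠ 0 := by decide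
  ext τ
  simp only [csupp, mem_filter, mem_sdiff, Pi.add_apply, Pi.one_apply, hone]
  tauto

lemma csupp_indicatorCochain {T : Finset (Finset V)} (hT : T ⊆ faces X k) :
    csupp X k (indicatorCochain T) = T := by
  ext τ
  by_cases h : τ ∈ T
  · simp [csupp, indicatorCochain, h, hT h]
  · simp [csupp, indicatorCochain, h]

lemma cnorm_add_cnorm_one_add (φ : Finset V → ZMod 2) :
    cnorm X k φ + cnorm X k (1 + φ) = #(faces X k) := by
  rw [cnorm, cnorm, csupp_one_add, add_comm]
  exact card_sdiff_add_card_eq_card (filter_subset _ _)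

lemma exists_subface (hX : IsComplex X) (hk : k ≠ 0) {τ : Finset V} (hτ : τ ∈ faces X k) :
    ∃ σ ∈ faces X (k - 1), σ ⊆ τ := by
  obtain ⟨hτX, hcard⟩ := mem_filter.1 hτ
  obtain ⟨v, hv⟩ := card_pos.1 (show 0 < #τ by omega)
  have hcard' : #(τ.erase v) = k - 1 + 1 := by rw [card_erase_of_mem hv]; omega
  refine ⟨τ.erase v, mem_filter.2 ⟨?_, hcard'⟩, erase_subset v τ⟩
  exact hX.2 τ hτX _ (erase_subset v τ) (card_pos.1 (by omega))

lemma fPrev_pos (hX : IsComplex X) (hk : 0 < #(faces X k)) : 0 < fPrev X k := by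
  unfold fPrev
  split_ifs with h
  · exact one_pos
  · obtain ⟨τ, hτ⟩ := card_pos.1 hk
    obtain ⟨σ, hσ, -⟩ := exists_subface hX h hτ
    exact card_pos.2 ⟨σ, hσ⟩

end Cochains

section Cosystoles

variable {V : Type*} [DecidableEq V] {X : Finset (Finset V)} {k : ℕ}

lemma cosys_zero (φ : Finset V → ZMod 2) :
    cosys X 0 φ = min (cnorm X 0 φ) (cnorm X 0 (1 + φ)) :=
  if_pos rfl

lemma cosys_le_cnorm_add_cob (hk : k ≠ 0) (φ ψ : Finset V → ZMod 2) :
    cosys X k φ ≤ cnorm X k (φ + cob X (k - 1) ψ) := by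
  rw [cosys, if_neg hk]
  exact Nat.sInf_le ⟨ψ, rfl⟩

lemma exists_cosys_eq_cnorm_add_cob (hk : k ≠ 0) (φ : Finset V → ZMod 2) :
    ∃ ψ, cosys X k φ = cnorm X k (φ + cob X (k - 1) ψ) := by
  rw [cosys, if_neg hk]
  exact Nat.sInf_mem (s := {m | ∃ ψ, m = cnorm X k (φ + cob X (k - 1) ψ)}) ⟨_, 0, rfl⟩

lemma cosys_le_card (φ : Finset V → ZMod 2) : cosys X k φ ≤ #(faces X k) := by
  by_cases hk : k = 0
  · subst hk
    exact (cosys_zero φ).trans_le ((min_le_left _ _).trans (card_filter_le _ _))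
  · exact (cosys_le_cnorm_add_cob hk φ 0).trans (card_filter_le _ _)

lemma bddAbove_range_cosys : BddAbove {m | ∃ φ : Finset V → ZMod 2, m = cosys X k φ} :=
  ⟨#(faces X k), by rintro _ ⟨φ, rfl⟩; exact cosys_le_card φ⟩

lemma cosys_le_maxCosys (φ : Finset V → ZMod 2) : cosys X k φ ≤ maxCosys X k :=
  le_csSup bddAbove_range_cosys ⟨φ, rfl⟩

lemma exists_maxCosys_eq_cosys : ∃ φ : Finset V → ZMod 2, maxCosys X k = cosys X k φ :=
  Nat.sSup_mem (s := {m | ∃ φ, m = cosys X k φ}) ⟨_, 0, rfl⟩ bddAbove_range_cosys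

end Cosystoles

lemma two_mul_card_filter_eq_card_of_involution {β : Type*} {s : Finset β} {p : β → Prop}
    [DecidablePred p] (f : β → β) (hf : ∀ x ∈ s, f x ∈ s) (hff : ∀ x, f (f x) = x)
    (hp : ∀ x ∈ s, p (f x) ↔ ¬p x) :
    2 * #(s.filter p) = #s := by
  have hswap : #(s.filter p) = #(s.filter (¬p ·)) := by
    refine card_nbij' f f ?_ ?_ (fun x _ => hff x) (fun x _ => hff x)
    · intro x hx
      simp only [coe_filter, Set.mem_ofPred_eq] at hx ⊢
      exact ⟨hf x hx.1, fun h => (hp x hx.1).1 h hx.2⟩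
    · intro x hx
      simp only [coe_filter, Set.mem_ofPred_eq] at hx ⊢
      exact ⟨hf x hx.1, (hp x hx.1).2 hx.2⟩
  rw [two_mul]
  nth_rewrite 2 [hswap]
  exact card_filter_add_card_filter_not p

section UpperBound

variable {V : Type*} [DecidableEq V] {X : Finset (Finset V)} {k : ℕ}

lemma two_mul_card_powerset_filter_add_cob_ne_zero (hX : IsComplex X) (hk : k ≠ 0)
    (φ : Finset V → ZMod 2) {τ : Finset V} (hτ : τ ∈ faces X k) :
    2 * #{S ∈ (faces X (k - 1)).powerset |
        (φ + cob X (k - 1) (indicatorCochain S)) τ ≠ 0} = 2 ^ #(faces X (k - 1)) := by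
  obtain ⟨σ, hσ, hστ⟩ := exists_subface hX hk hτ
  rw [two_mul_card_filter_eq_card_of_involution (· ∆ {σ}), card_powerset]
  · intro S hS
    exact mem_powerset.2 (symmDiff_subset_union.trans
      (union_subset (mem_powerset.1 hS) (singleton_subset_iff.2 hσ)))
  · exact fun S => symmDiff_symmDiff_cancel_right _ _
  · intro S _
    have hflip : ∀ a : ZMod 2, a + 1 ≠ 0 ↔ ¬a ≠ 0 := by decide
    simp only [indicatorCochain_symmDiff, cob_add, Pi.add_apply,
      cob_indicatorCochain_singleton hσ hστ, ← add_assoc, hflip]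

lemma sum_two_mul_cnorm_add_cob (hX : IsComplex X) (hk : k ≠ 0) (φ : Finset V → ZMod 2) :
    ∑ S ∈ (faces X (k - 1)).powerset, 2 * cnorm X k (φ + cob X (k - 1) (indicatorCochain S))
      = ∑ _S ∈ (faces X (k - 1)).powerset, #(faces X k) := by
  calc ∑ S ∈ (faces X (k - 1)).powerset,
          2 * cnorm X k (φ + cob X (k - 1) (indicatorCochain S))
      = ∑ τ ∈ faces X k, 2 * #{S ∈ (faces X (k - 1)).powerset |
          (φ + cob X (k - 1) (indicatorCochain S)) τ ≠ 0} := by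
        simp only [cnorm, csupp, card_filter, mul_sum]
        exact sum_comm
    _ = ∑ _τ ∈ faces X k, 2 ^ #(faces X (k - 1)) :=
        sum_congr rfl fun τ hτ => two_mul_card_powerset_filter_add_cob_ne_zero hX hk φ hτ
    _ = ∑ _S ∈ (faces X (k - 1)).powerset, #(faces X k) := by
        simp only [sum_const, card_powerset, smul_eq_mul, mul_comm]

lemma two_mul_cosys_le (hX : IsComplex X) (φ : Finset V → ZMod 2) :
    2 * cosys X k φ ≤ #(faces X k) := by
  by_cases hk : k = 0
  · subst hk
    rw [cosys_zero, ← cnorm_add_cnorm_one_add φ]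
    omega
  · obtain ⟨S, -, hS⟩ := exists_le_of_sum_le ⟨∅, empty_mem_powerset _⟩
      (sum_two_mul_cnorm_add_cob hX hk φ).le
    exact (Nat.mul_le_mul_left 2 (cosys_le_cnorm_add_cob hk φ _)).trans hS

lemma two_mul_maxCosys_le (hX : IsComplex X) : 2 * maxCosys X k ≤ #(faces X k) := by
  obtain ⟨φ, hφ⟩ := exists_maxCosys_eq_cosys (X := X) (k := k)
  exact hφ ▸ two_mul_cosys_le hX φ

end UpperBound

section Chernoff

open Real

lemma one_add_exp_neg_le (t : ℝ) : 1 + exp (-t) ≤ 2 * exp (t ^ 2 / 8 - t / 2) :=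
  calc 1 + exp (-t) = (exp (t / 2) + exp (-(t / 2))) * exp (-(t / 2)) := by
        rw [add_mul, ← exp_add, ← exp_add, add_neg_cancel, exp_zero]
        ring_nf
    _ = 2 * cosh (t / 2) * exp (-(t / 2)) := by
        rw [cosh_eq]
        ring
    _ ≤ 2 * exp ((t / 2) ^ 2 / 2) * exp (-(t / 2)) := by
        gcongr
        exact cosh_le_exp_half_sq _
    _ = 2 * exp (t ^ 2 / 8 - t / 2) := by
        rw [mul_assoc, ← exp_add]
        ring_nf

lemma card_powerset_filter_card_le_le_exp_mul {α : Type*} (F : Finset α) (L : ℝ) {t : ℝ}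
    (ht : 0 ≤ t) :
    (#{D ∈ F.powerset | (#D : ℝ) ≤ L} : ℝ) ≤ exp (t * L) * (1 + exp (-t)) ^ #F :=
  calc (#{D ∈ F.powerset | (#D : ℝ) ≤ L} : ℝ)
      = ∑ D ∈ F.powerset with (#D : ℝ) ≤ L, (1 : ℝ) := by simp
    _ ≤ ∑ D ∈ F.powerset with (#D : ℝ) ≤ L, exp (t * L) * exp (-t) ^ #D := by
        refine sum_le_sum fun D hD => ?_
        rw [← exp_nat_mul, ← exp_add]
        exact one_le_exp (by nlinarith [(mem_filter.1 hD).2])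
    _ ≤ ∑ D ∈ F.powerset, exp (t * L) * exp (-t) ^ #D :=
        sum_le_sum_of_subset_of_nonneg (filter_subset _ _) fun _ _ _ => by positivity
    _ = exp (t * L) * (1 + exp (-t)) ^ #F := by
        rw [← mul_sum, add_comm, ← sum_pow_mul_eq_add_pow]
        simp

lemma card_powerset_filter_card_le_half_sub_le {α : Type*} (F : Finset α) {s : ℝ}
    (hs : 0 ≤ s) :
    (#{D ∈ F.powerset | (#D : ℝ) ≤ #F / 2 - s} : ℝ) ≤ 2 ^ #F * exp (-(2 * s ^ 2 / #F)) := by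
  set n : ℝ := (#F : ℝ)
  set t := 4 * s / n
  have hexp : t * (n / 2 - s) + n * (t ^ 2 / 8 - t / 2) = -(2 * s ^ 2 / n) := by
    rcases eq_or_ne n 0 with hn | hn
    · simp [t, hn]
    · simp only [t]
      field_simp
      ring
  calc _ ≤ exp (t * (n / 2 - s)) * (1 + exp (-t)) ^ #F :=
        card_powerset_filter_card_le_le_exp_mul F _ (by positivity)
    _ ≤ exp (t * (n / 2 - s)) * (2 * exp (t ^ 2 / 8 - t / 2)) ^ #F := by
        gcongr
        exact one_add_exp_neg_le t
    _ = 2 ^ #F * exp (-(2 * s ^ 2 / n)) := by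
        rw [mul_pow, ← exp_nat_mul, ← hexp, exp_add]
        ring

lemma two_mul_exp_neg_two_hundred_lt_one : 2 * exp (-200) < 1 := by
  have h := add_one_lt_exp (show (200 : ℝ) ≠ 0 by norm_num)
  rw [exp_neg, ← div_eq_mul_inv, div_lt_one (exp_pos _)]
  linarith

end Chernoff

section LowerBound

variable {V : Type*} [DecidableEq V] {X : Finset (Finset V)} {k : ℕ}

/-- For `k = 0` the reduced coboundaries are the constant cochains `0` and `1`. -/
def coboundarySupports (X : Finset (Finset V)) (k : ℕ) : Finset (Finset (Finset V)) :=
  if k = 0 then {∅, faces X 0}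
  else (faces X (k - 1)).powerset.image fun S => csupp X k (cob X (k - 1) (indicatorCochain S))

lemma card_coboundarySupports_le : #(coboundarySupports X k) ≤ 2 ^ fPrev X k := by
  unfold coboundarySupports fPrev
  split_ifs
  · exact card_le_two
  · exact card_image_le.trans (card_powerset _).le

lemma subset_faces_of_mem_coboundarySupports {B : Finset (Finset V)}
    (hB : B ∈ coboundarySupports X k) : B ⊆ faces X k := by
  unfold coboundarySupports at hB
  split_ifs at hB with hk
  · subst hk
    rcases mem_insert.1 hB with rfl | hB
    · exact empty_subset _
    · exact (mem_singleton.1 hB).le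
  · obtain ⟨S, -, rfl⟩ := mem_image.1 hB
    exact filter_subset _ _

lemma exists_card_symmDiff_eq_cosys (φ : Finset V → ZMod 2) :
    ∃ B ∈ coboundarySupports X k, #(csupp X k φ ∆ B) = cosys X k φ := by
  by_cases hk : k = 0
  · subst hk
    rcases min_choice (cnorm X 0 φ) (cnorm X 0 (1 + φ)) with h | h
    · refine ⟨∅, by simp [coboundarySupports], ?_⟩
      rw [cosys_zero, h, ← bot_eq_empty, symmDiff_bot]
      rfl
    · refine ⟨faces X 0, by simp [coboundarySupports], ?_⟩
      rw [cosys_zero, h, symmDiff_of_le (filter_subset _ _), cnorm, csupp_one_add]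
  · obtain ⟨ψ, hψ⟩ := exists_cosys_eq_cnorm_add_cob hk φ
    refine ⟨csupp X k (cob X (k - 1) ψ), ?_, by rw [hψ, cnorm, csupp_add]⟩
    rw [coboundarySupports, if_neg hk]
    exact mem_image.2 ⟨csupp X (k - 1) ψ, mem_powerset.2 (filter_subset _ _),
      by rw [cob_indicatorCochain_csupp]⟩

lemma two_pow_card_faces_le :
    2 ^ #(faces X k) ≤ 2 ^ fPrev X k * #{D ∈ (faces X k).powerset | #D ≤ maxCosys X k} := by
  set small := {D ∈ (faces X k).powerset | #D ≤ maxCosys X k}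
  have hcover : (faces X k).powerset ⊆
      (coboundarySupports X k).biUnion fun B => small.image (· ∆ B) := by
    intro T hT
    obtain ⟨B, hB, hcard⟩ :=
      exists_card_symmDiff_eq_cosys (X := X) (k := k) (indicatorCochain T)
    rw [csupp_indicatorCochain (mem_powerset.1 hT)] at hcard
    refine mem_biUnion.2 ⟨B, hB, mem_image.2 ⟨T ∆ B, mem_filter.2 ⟨?_, ?_⟩,
      symmDiff_symmDiff_cancel_right _ _⟩⟩
    · exact mem_powerset.2 (symmDiff_subset_union.trans
        (union_subset (mem_powerset.1 hT) (subset_faces_of_mem_coboundarySupports hB)))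
    · exact hcard ▸ cosys_le_maxCosys _
  calc 2 ^ #(faces X k) = #(faces X k).powerset := (card_powerset _).symm
    _ ≤ _ := card_le_card hcover
    _ ≤ #(coboundarySupports X k) * #small :=
        card_biUnion_le_card_mul _ _ _ fun _ _ => card_image_le
    _ ≤ _ := Nat.mul_le_mul_right _ card_coboundarySupports_le

lemma le_maxCosys (hm : 0 < fPrev X k) (hn : 0 < #(faces X k)) :
    (1 - 20 * √((fPrev X k : ℝ) / #(faces X k))) * ((#(faces X k) : ℝ) / 2)
      ≤ maxCosys X k := by
  set n : ℝ := (#(faces X k) : ℝ) with hn_def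
  set s := 10 * n * √(fPrev X k / n)
  have hn0 : 0 < n := Nat.cast_pos.2 hn
  have hs2 : 2 * s ^ 2 / n = 200 * fPrev X k := by
    rw [mul_pow, mul_pow, Real.sq_sqrt (by positivity)]
    field_simp
    ring
  by_contra! hlt
  have hsmall : #{D ∈ (faces X k).powerset | #D ≤ maxCosys X k}
      ≤ #{D ∈ (faces X k).powerset | (#D : ℝ) ≤ n / 2 - s} := by
    refine card_le_card fun D hD => ?_
    rw [mem_filter] at hD ⊢
    have : (#D : ℝ) ≤ maxCosys X k := by exact_mod_cast hD.2
    exact ⟨hD.1, by linarith⟩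
  have htail := card_powerset_filter_card_le_half_sub_le (faces X k) (s := s) (by positivity)
  rw [← hn_def, hs2] at htail
  have hgrow : (2 : ℝ) ^ #(faces X k)
      ≤ 2 ^ #(faces X k) * (2 * Real.exp (-200)) ^ fPrev X k :=
    calc (2 : ℝ) ^ #(faces X k)
        ≤ 2 ^ fPrev X k * #{D ∈ (faces X k).powerset | #D ≤ maxCosys X k} := by
          exact_mod_cast two_pow_card_faces_le
      _ ≤ 2 ^ fPrev X k * (2 ^ #(faces X k) * Real.exp (-(200 * fPrev X k))) := by
          gcongr
          exact (Nat.cast_le.2 hsmall).trans htail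
      _ = 2 ^ #(faces X k) * (2 * Real.exp (-200)) ^ fPrev X k := by
          rw [mul_pow, ← Real.exp_nat_mul]
          ring_nf
  exact (pow_lt_one₀ (by positivity) two_mul_exp_neg_two_hundred_lt_one hm.ne').not_ge
    ((le_mul_iff_one_le_right (by positivity)).1 hgrow)

end LowerBound

/-- **Bounds on the maximal cosystole**:
`(1 - 20√(f_{k-1}/f_k)) ⬝ f_k/2 ≤ λ_k(X) ≤ f_k/2`. -/
theorem maxCosys_bounds {V : Type*} [DecidableEq V]
    (X : Finset (Finset V)) (hX : IsComplex X) (k : ℕ)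
    (hN : 0 < (faces X k).card) :
    (1 - 20 * Real.sqrt ((fPrev X k : ℝ) / ((faces X k).card : ℝ))) *
        (((faces X k).card : ℝ) / 2) ≤ (maxCosys X k : ℝ) ∧
      (maxCosys X k : ℝ) ≤ ((faces X k).card : ℝ) / 2 := by
  refine ⟨le_maxCosys (fPrev_pos hX hN) hN, ?_⟩
  rw [le_div_iff₀ two_pos, mul_comm]
  exact_mod_cast two_mul_maxCosys_le hX
end

section
/- Non-abelian 1-expansion of the simplex: Let G be a group with identity 1, let n ≥ 1, and let φ : {(u, v) ∈ {1,…,n}² : u ≠ v} → G be a function satisfying φ(u, v) = φ(v, u)^{−1} for all u ≠ v. Define ‖φ‖ = |{ {u, v} : φ(u, v) ≠ 1 }| (a set of unordered pairs), ‖d₁φ‖ = |{ {u, v, w} : φ(u, v)·φ(v, w)·φ(w, u) ≠ 1 }| (this condition is independent of the chosen ordering of u, v, w), and ‖φ‖_csy = min over all functions ψ : {1,…,n} → G of ‖ψ.φ‖, where (ψ.φ)(u, v) = ψ(u)·φ(u, v)·ψ(v)^{−1}. Then 3·‖d₁φ‖ ≥ n·‖φ‖_csy. -/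
open Finset

/-- The norm of a non-abelian `G`-valued `1`-cochain on the simplex with vertex set
`{1,…,n}`: the number of unordered pairs `{u,v}` with `φ u v ≠ 1`, counted as ordered
pairs with `u < v`. -/
def naNorm {G : Type*} [Group G] [DecidableEq G] (n : ℕ) (φ : Fin n → Fin n → G) : ℕ :=
  (Finset.univ.filter fun q : Fin n × Fin n => q.1 < q.2 ∧ φ q.1 q.2 ≠ 1).card

/-- The norm of the non-abelian coboundary `d₁φ`: the number of unordered triples
`{u,v,w}` with `φ u v ⬝ φ v w ⬝ φ w u ≠ 1`, counted as ordered triples with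
`u < v < w`. -/
def naCobNorm {G : Type*} [Group G] [DecidableEq G] (n : ℕ) (φ : Fin n → Fin n → G) : ℕ :=
  (Finset.univ.filter fun t : Fin n × Fin n × Fin n =>
    t.1 < t.2.1 ∧ t.2.1 < t.2.2 ∧ φ t.1 t.2.1 * φ t.2.1 t.2.2 * φ t.2.2 t.1 ≠ 1).card

/-- The non-abelian cosystolic norm: the minimum of `‖ψ.φ‖` over all `ψ : {1,…,n} → G`,
where `(ψ.φ)(u,v) = ψ u ⬝ φ u v ⬝ (ψ v)⁻¹`. -/
noncomputable def naCosys {G : Type*} [Group G] [DecidableEq G] (n : ℕ)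
    (φ : Fin n → Fin n → G) : ℕ :=
  sInf {m | ∃ ψ : Fin n → G, m = naNorm n fun u v => ψ u * φ u v * (ψ v)⁻¹}

lemma rot_eq_one {G : Type*} [Group G] {a b c : G} : a * b * c = 1 ↔ b * c * a = 1 := by
  constructor <;> intro h
  · calc b * c * a = a⁻¹ * (a * b * c) * a := by group
      _ = 1 := by rw [h]; group
  · calc a * b * c = a * (b * c * a) * a⁻¹ := by group
      _ = 1 := by rw [h]; group

lemma conj_eq_one_iff' {G : Type*} [Group G] {a x : G} : a⁻¹ * x * a = 1 ↔ x = 1 := by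
  constructor <;> intro h
  · have := rot_eq_one.mp h
    simpa [mul_assoc] using this
  · rw [h]; group

lemma card_filter_prod {α β : Type*} [Fintype α] [Fintype β] (p : α × β → Prop)
    [DecidablePred p] :
    (univ.filter p).card = ∑ a : α, (univ.filter fun b => p (a, b)).card := by
  simp only [Finset.card_filter]
  rw [Fintype.sum_prod_type]

/-- **Non-abelian 1-expansion of the simplex**: for any group `G` and any non-abelian
`1`-cochain `φ` on the `(n-1)`-simplex, `3‖d₁φ‖ ≥ n‖φ‖_csy`. -/
theorem nonabelian_simplex_expansion {G : Type*} [Group G] [DecidableEq G]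
    (n : ℕ) (hn : 1 ≤ n) (φ : Fin n → Fin n → G)
    (hsym : ∀ u v : Fin n, u ≠ v → φ u v = (φ v u)⁻¹) :
    n * naCosys n φ ≤ 3 * naCobNorm n φ := by
  -- cyclic invariance
  have cyc : ∀ u v w : Fin n,
      (φ u v * φ v w * φ w u = 1) ↔ (φ w u * φ u v * φ v w = 1) := by
    intro u v w
    exact rot_eq_one.symm
  -- swap invariance
  have swap : ∀ u v w : Fin n, u ≠ v → v ≠ w → u ≠ w →
      ((φ u v * φ v w * φ w u = 1) ↔ (φ u w * φ w v * φ v u = 1)) := by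
    intro u v w huv hvw huw
    have h : φ u w * φ w v * φ v u = (φ u v * φ v w * φ w u)⁻¹ := by
      rw [hsym u w huw, hsym w v hvw.symm, hsym v u huv.symm]
      group
    rw [h, inv_eq_one]
  -- the per-vertex local sets
  set S : Fin n → Finset (Fin n × Fin n) := fun w =>
    univ.filter fun q : Fin n × Fin n =>
      q.1 < q.2 ∧ q.1 ≠ w ∧ q.2 ≠ w ∧ φ q.1 q.2 * φ q.2 w * φ w q.1 ≠ 1 with hS
  -- step 1 : naCosys ≤ (S w).card for each w
  have step1 : ∀ w : Fin n, naCosys n φ ≤ (S w).card := by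
    intro w
    set ψ : Fin n → G := fun u => if u = w then 1 else (φ u w)⁻¹ with hψ
    have h1 : naCosys n φ ≤ naNorm n fun u v => ψ u * φ u v * (ψ v)⁻¹ :=
      Nat.sInf_le ⟨ψ, rfl⟩
    have h2 : naNorm n (fun u v => ψ u * φ u v * (ψ v)⁻¹) = (S w).card := by
      unfold naNorm
      rw [hS]
      congr 1
      apply Finset.filter_congr
      intro q _
      constructor
      · rintro ⟨hlt, hne⟩
        refine ⟨hlt, ?_, ?_, ?_⟩
        · rintro rfl
          apply hne
          have hvw : q.2 ≠ q.1 := hlt.ne'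
          simp only [hψ, if_pos rfl, if_neg hvw, one_mul, inv_inv]
          rw [hsym q.1 q.2 hlt.ne]
          group
        · rintro rfl
          apply hne
          have huw : q.1 ≠ q.2 := hlt.ne
          simp only [hψ, if_pos rfl, if_neg huw, inv_one, mul_one]
          group
        · intro hc
          apply hne
          have huw : q.1 ≠ w := by
            rintro rfl
            apply hne
            have hvw : q.2 ≠ q.1 := hlt.ne'
            simp only [hψ, if_pos rfl, if_neg hvw, one_mul, inv_inv]
            rw [hsym q.1 q.2 hlt.ne]
            group
          have hvw : q.2 ≠ w := by
            rintro rfl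
            apply hne
            have huw' : q.1 ≠ q.2 := hlt.ne
            simp only [hψ, if_pos rfl, if_neg huw', inv_one, mul_one]
            group
          simp only [hψ, if_neg huw, if_neg hvw, inv_inv]
          have : (φ q.1 w)⁻¹ * φ q.1 q.2 * φ q.2 w
              = (φ q.1 w)⁻¹ * (φ q.1 q.2 * φ q.2 w * φ w q.1) * (φ q.1 w) := by
            rw [hsym w q.1 (Ne.symm huw)]
            group
          rw [this, hc]
          group
      · rintro ⟨hlt, huw, hvw, hc⟩
        refine ⟨hlt, ?_⟩
        simp only [hψ, if_neg huw, if_neg hvw, inv_inv]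
        intro h
        apply hc
        have heq : (φ q.1 w)⁻¹ * φ q.1 q.2 * φ q.2 w
            = (φ q.1 w)⁻¹ * (φ q.1 q.2 * φ q.2 w * φ w q.1) * (φ q.1 w) := by
          rw [hsym w q.1 (Ne.symm huw)]
          group
        rw [heq] at h
        exact conj_eq_one_iff'.mp h
    rw [← h2]
    exact h1
  -- step 2 : summing the local sets counts each bad triple three times
  set P : Fin n × Fin n × Fin n → Prop := fun p =>
    p.2.1 < p.2.2 ∧ p.2.1 ≠ p.1 ∧ p.2.2 ≠ p.1 ∧
      φ p.2.1 p.2.2 * φ p.2.2 p.1 * φ p.1 p.2.1 ≠ 1 with hP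
  have hsum : ∑ w : Fin n, (S w).card = (univ.filter P).card := by
    rw [card_filter_prod P]
  set Bad : Finset (Fin n × Fin n × Fin n) :=
    univ.filter fun t : Fin n × Fin n × Fin n =>
      t.1 < t.2.1 ∧ t.2.1 < t.2.2 ∧ φ t.1 t.2.1 * φ t.2.1 t.2.2 * φ t.2.2 t.1 ≠ 1 with hBad
  have hT : (univ.filter P).card = 3 * Bad.card := by
    set T := univ.filter P with hTdef
    have hsplit1 := Finset.card_filter_add_card_filter_not
      (s := T) (p := fun p : Fin n × Fin n × Fin n => p.1 < p.2.1)
    have hsplit2 := Finset.card_filter_add_card_filter_not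
      (s := T.filter fun p : Fin n × Fin n × Fin n => ¬ p.1 < p.2.1)
      (p := fun p : Fin n × Fin n × Fin n => p.1 < p.2.2)
    -- T₁ : w < u < v
    have e1 : T.filter (fun p : Fin n × Fin n × Fin n => p.1 < p.2.1) = Bad := by
      ext p
      simp only [hTdef, hBad, hP, mem_filter, mem_univ, true_and]
      constructor
      · rintro ⟨⟨h1, h2, h3, h4⟩, h5⟩
        exact ⟨h5, h1, fun hc => h4 ((cyc p.2.1 p.2.2 p.1).mpr hc)⟩
      · rintro ⟨h5, h1, h4⟩
        exact ⟨⟨h1, h5.ne', (h5.trans h1).ne', fun hc => h4 ((cyc p.2.1 p.2.2 p.1).mp hc)⟩, h5⟩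
    -- T₂ : u < w < v
    have e2 : ((T.filter fun p : Fin n × Fin n × Fin n => ¬ p.1 < p.2.1).filter
        fun p : Fin n × Fin n × Fin n => p.1 < p.2.2).card = Bad.card := by
      apply Finset.card_bij (fun p _ => (p.2.1, p.1, p.2.2))
      · rintro ⟨w, u, v⟩ hp
        simp only [hTdef, hBad, hP, mem_filter, mem_univ, true_and] at hp ⊢
        obtain ⟨⟨⟨h1, h2, h3, h4⟩, h5⟩, h6⟩ := hp
        have huw : u < w := lt_of_le_of_ne (not_lt.mp h5) h2
        exact ⟨huw, h6, fun hc => h4 ((swap u v w h1.ne h3 h2).mpr hc)⟩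
      · rintro ⟨w, u, v⟩ _ ⟨w', u', v'⟩ _ h
        simp only [Prod.mk.injEq] at h
        obtain ⟨h1, h2, h3⟩ := h
        simp [h1, h2, h3]
      · rintro ⟨a, b, c⟩ hq
        simp only [hBad, mem_filter, mem_univ, true_and] at hq
        obtain ⟨h1, h2, h3⟩ := hq
        refine ⟨(b, a, c), ?_, rfl⟩
        simp only [hTdef, hBad, hP, mem_filter, mem_univ, true_and]
        exact ⟨⟨⟨h1.trans h2, h1.ne, h2.ne', fun hc =>
          h3 ((swap a b c h1.ne h2.ne (h1.trans h2).ne).mpr hc)⟩,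
          not_lt.mpr h1.le⟩, h2⟩
      -- T₃ : u < v < w
    have e3 : ((T.filter fun p : Fin n × Fin n × Fin n => ¬ p.1 < p.2.1).filter
        fun p : Fin n × Fin n × Fin n => ¬ p.1 < p.2.2).card = Bad.card := by
      apply Finset.card_bij (fun p _ => (p.2.1, p.2.2, p.1))
      · rintro ⟨w, u, v⟩ hp
        simp only [hTdef, hBad, hP, mem_filter, mem_univ, true_and] at hp ⊢
        obtain ⟨⟨⟨h1, h2, h3, h4⟩, h5⟩, h6⟩ := hp
        exact ⟨h1, lt_of_le_of_ne (not_lt.mp h6) h3, h4⟩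
      · rintro ⟨w, u, v⟩ _ ⟨w', u', v'⟩ _ h
        simp only [Prod.mk.injEq] at h
        obtain ⟨h1, h2, h3⟩ := h
        simp [h1, h2, h3]
      · rintro ⟨a, b, c⟩ hq
        simp only [hBad, mem_filter, mem_univ, true_and] at hq
        obtain ⟨h1, h2, h3⟩ := hq
        refine ⟨(c, a, b), ?_, rfl⟩
        simp only [hTdef, hBad, hP, mem_filter, mem_univ, true_and]
        exact ⟨⟨⟨h1, (h1.trans h2).ne, h2.ne, h3⟩, not_lt.mpr (h1.trans h2).le⟩,
          not_lt.mpr h2.le⟩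
    have e1' := congrArg Finset.card e1
    omega
  calc n * naCosys n φ = ∑ _w : Fin n, naCosys n φ := by
        rw [Finset.sum_const, card_univ, Fintype.card_fin, smul_eq_mul]
    _ ≤ ∑ w : Fin n, (S w).card := Finset.sum_le_sum fun w _ => step1 w
    _ = (univ.filter P).card := hsum
    _ = 3 * Bad.card := hT
    _ = 3 * naCobNorm n φ := by rw [hBad]; rfl
end
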